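/- Let X_μ ~ ESN(μ, σ², ε) with μ > 0, σ > 0, ε ∈ (−1,1), and let Z_μ = max(X_μ, 0). Then E[Z_μ] = μ − (1+ε)·Φ(−μ/((1+ε)σ))·μ + (1+ε)²·φ(−μ/((1+ε)σ))·σ − (4ε/√(2π))·σ. -/

import Mathlib

open MeasureTheory Real Set ProbabilityTheory

noncomputable def phi (t : ℝ) : ℝ := Real.exp (-t^2/2) / Real.sqrt (2*Real.pi)
noncomputable def Phi (t : ℝ) : ℝ := ∫ u in Set.Iic t, phi u

noncomputable def esnPdf (μ σ ε x : ℝ) : ℝ :=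
  if x < μ then phi ((x-μ) / ((1+ε)*σ)) / σ else phi ((x-μ) / ((1-ε)*σ)) / σ

/-!
On each side of the mode the density is a rescaled normal density, and
`x ↦ a μ Φ((x - μ)/(a σ)) - a² σ φ((x - μ)/(a σ))` is a primitive of
`x ↦ x φ((x - μ)/(a σ)) / σ` (because `φ' t = -t φ t`). Hence `E[max(X, 0)]` is the
increment of this primitive with `a = 1 + ε` over `[0, μ]` plus its increment with
`a = 1 - ε` over `[μ, ∞)`; the values `Φ 0 = 1/2` and `φ 0 = 1/√(2π)` at the mode produce
the term `-4εσ/√(2π)`.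
-/

open Filter Topology

lemma phi_eq_gaussianPDFReal : phi = gaussianPDFReal 0 1 := by
  ext t
  simp [phi, gaussianPDFReal, div_eq_inv_mul]

@[fun_prop]
lemma continuous_phi : Continuous phi := by
  unfold phi; fun_prop

lemma phi_nonneg (t : ℝ) : 0 ≤ phi t := by
  unfold phi; positivity

lemma phi_neg (t : ℝ) : phi (-t) = phi t := by
  simp [phi]

lemma phi_zero : phi 0 = 1 / √(2 * π) := by
  simp [phi]

lemma integrable_phi : Integrable phi := by
  rw [phi_eq_gaussianPDFReal]; exact integrable_gaussianPDFReal 0 1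

lemma integral_phi : ∫ t, phi t = 1 := by
  rw [phi_eq_gaussianPDFReal]; exact integral_gaussianPDFReal_eq_one 0 one_ne_zero

lemma hasDerivAt_phi (t : ℝ) : HasDerivAt phi (-t * phi t) t := by
  have hexponent : HasDerivAt (fun x : ℝ => -x ^ 2 / 2) (-t) t :=
    (((hasDerivAt_pow 2 t).fun_neg).div_const 2).congr_deriv (by norm_num; ring)
  exact (hexponent.exp.div_const (√(2 * π))).congr_deriv (by simp only [phi]; ring)

lemma tendsto_phi_atTop : Tendsto phi atTop (𝓝 0) := by
  have h := (tendsto_exp_neg_atTop_nhds_zero.comp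
    ((tendsto_pow_atTop two_ne_zero).atTop_div_const two_pos)).div_const (√(2 * π))
  rw [zero_div] at h
  exact h.congr fun t => by simp [phi, neg_div]

lemma Phi_zero : Phi 0 = 1 / 2 := by
  have hsymm : ∫ t in Ioi 0, phi t = Phi 0 := by
    simpa [phi_neg, Phi] using integral_comp_neg_Ioi 0 phi
  have htotal := intervalIntegral.integral_Iic_add_Ioi (b := 0) integrable_phi.integrableOn
    integrable_phi.integrableOn
  rw [integral_phi, hsymm] at htotal
  unfold Phi at htotal ⊢
  linarith

lemma hasDerivAt_Phi (t : ℝ) : HasDerivAt Phi (phi t) t := by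
  have hPhi : Phi = fun s => Phi 0 + ∫ u in (0)..s, phi u := by
    ext s
    rw [← intervalIntegral.integral_Iic_sub_Iic integrable_phi.integrableOn
      integrable_phi.integrableOn, Phi, Phi, add_sub_cancel]
  rw [hPhi]
  exact (intervalIntegral.integral_hasDerivAt_right integrable_phi.intervalIntegrable
    (continuous_phi.stronglyMeasurableAtFilter _ _) continuous_phi.continuousAt).const_add _

lemma tendsto_Phi_atTop : Tendsto Phi atTop (𝓝 1) := by
  have h := tendsto_setIntegral_of_monotone (μ := volume) (f := phi) (fun t => measurableSet_Iic)
    (fun _ _ hst => Iic_subset_Iic.mpr hst) integrable_phi.integrableOn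
  rwa [iUnion_Iic, setIntegral_univ, integral_phi] at h

noncomputable def momentPrimitive (μ σ a x : ℝ) : ℝ :=
  a * μ * Phi ((x - μ) / (a * σ)) - a ^ 2 * σ * phi ((x - μ) / (a * σ))

section momentPrimitive

variable {μ σ a : ℝ}

lemma hasDerivAt_momentPrimitive (ha : a ≠ 0) (hσ : σ ≠ 0) (x : ℝ) :
    HasDerivAt (momentPrimitive μ σ a) (x * phi ((x - μ) / (a * σ)) / σ) x := by
  have hinner : HasDerivAt (fun y : ℝ => (y - μ) / (a * σ)) (1 / (a * σ)) x := by
    simpa using ((hasDerivAt_id x).sub_const μ).div_const (a * σ)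
  have h := (((hasDerivAt_Phi _).comp x hinner).const_mul (a * μ)).sub
    (((hasDerivAt_phi _).comp x hinner).const_mul (a ^ 2 * σ))
  exact h.congr_deriv (by field_simp; ring)

lemma tendsto_momentPrimitive_atTop (ha : 0 < a) (hσ : 0 < σ) :
    Tendsto (momentPrimitive μ σ a) atTop (𝓝 (a * μ)) := by
  have hscale : Tendsto (fun x : ℝ => (x - μ) / (a * σ)) atTop atTop :=
    (tendsto_atTop_add_const_right _ (-μ) tendsto_id).atTop_div_const (by positivity)
  have h := ((tendsto_Phi_atTop.comp hscale).const_mul (a * μ)).sub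
    ((tendsto_phi_atTop.comp hscale).const_mul (a ^ 2 * σ))
  rwa [mul_one, mul_zero, sub_zero] at h

lemma momentPrimitive_self :
    momentPrimitive μ σ a μ = a * μ / 2 - a ^ 2 * σ / √(2 * π) := by
  simp only [momentPrimitive, sub_self, zero_div, Phi_zero, phi_zero]
  ring

lemma integral_Ioc_eq_momentPrimitive_sub (ha : a ≠ 0) (hσ : σ ≠ 0) {b c : ℝ}
    (hbc : b ≤ c) :
    ∫ x in Ioc b c, x * phi ((x - μ) / (a * σ)) / σ
      = momentPrimitive μ σ a c - momentPrimitive μ σ a b := by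
  rw [← intervalIntegral.integral_of_le hbc]
  exact intervalIntegral.integral_eq_sub_of_hasDerivAt
    (fun x _ => hasDerivAt_momentPrimitive ha hσ x)
    (Continuous.intervalIntegrable (by fun_prop) b c)

variable {b : ℝ}

lemma integrableOn_Ioi_and_integral_Ioi_eq (ha : 0 < a) (hσ : 0 < σ) (hb : 0 ≤ b) :
    IntegrableOn (fun x => x * phi ((x - μ) / (a * σ)) / σ) (Ioi b) ∧
      ∫ x in Ioi b, x * phi ((x - μ) / (a * σ)) / σ = a * μ - momentPrimitive μ σ a b := by
  have hderiv := hasDerivAt_momentPrimitive (μ := μ) ha.ne' hσ.ne'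
  have hnonneg : ∀ x ∈ Ioi b, 0 ≤ x * phi ((x - μ) / (a * σ)) / σ := fun x hx =>
    div_nonneg (mul_nonneg (hb.trans (le_of_lt hx)) (phi_nonneg _)) hσ.le
  have hcont := (hderiv b).continuousAt.continuousWithinAt (s := Ici b)
  have hlim := tendsto_momentPrimitive_atTop (μ := μ) ha hσ
  exact ⟨integrableOn_Ioi_deriv_of_nonneg hcont (fun x _ => hderiv x) hnonneg hlim,
    integral_Ioi_of_hasDerivAt_of_nonneg hcont (fun x _ => hderiv x) hnonneg hlim⟩

end momentPrimitive

lemma esnPdf_of_le {μ σ ε x : ℝ} (hx : x ≤ μ) :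
    esnPdf μ σ ε x = phi ((x - μ) / ((1 + ε) * σ)) / σ := by
  rcases hx.lt_or_eq with hlt | rfl
  · exact if_pos hlt
  · simp [esnPdf]

lemma esnPdf_of_ge {μ σ ε x : ℝ} (hx : μ ≤ x) :
    esnPdf μ σ ε x = phi ((x - μ) / ((1 - ε) * σ)) / σ :=
  if_neg hx.not_gt

lemma integral_max_mul_esnPdf {μ σ ε : ℝ} (hμ : 0 < μ) (hσ : 0 < σ) (hε1 : -1 < ε)
    (hε2 : ε < 1) :
    ∫ x, max x 0 * esnPdf μ σ ε x
      = momentPrimitive μ σ (1 + ε) μ - momentPrimitive μ σ (1 + ε) 0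
        + ((1 - ε) * μ - momentPrimitive μ σ (1 - ε) μ) := by
  set f := fun x => max x 0 * esnPdf μ σ ε x
  have hf_Iic : EqOn f 0 (Iic 0) := fun x hx => by
    simp [f, max_eq_right (mem_Iic.mp hx)]
  have hf_Ioc : EqOn f (fun x => x * phi ((x - μ) / ((1 + ε) * σ)) / σ) (Ioc 0 μ) :=
    fun x hx => by simp only [f, max_eq_left hx.1.le, esnPdf_of_le hx.2, mul_div_assoc]
  have hf_Ioi : EqOn f (fun x => x * phi ((x - μ) / ((1 - ε) * σ)) / σ) (Ioi μ) :=
    fun x hx => by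
      simp only [f, max_eq_left (hμ.trans hx).le, esnPdf_of_ge (le_of_lt hx), mul_div_assoc]
  obtain ⟨hintUpper, hintegralUpper⟩ :=
    integrableOn_Ioi_and_integral_Ioi_eq (μ := μ) (by linarith : 0 < 1 - ε) hσ hμ.le
  have hint_Iic : IntegrableOn f (Iic 0) :=
    integrableOn_zero.congr_fun hf_Iic.symm measurableSet_Iic
  have hint_Ioc : IntegrableOn f (Ioc 0 μ) :=
    (Continuous.integrableOn_Ioc (by fun_prop)).congr_fun hf_Ioc.symm measurableSet_Ioc
  have hint_Ioi : IntegrableOn f (Ioi μ) := hintUpper.congr_fun hf_Ioi.symm measurableSet_Ioi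
  have hint_Iic_μ : IntegrableOn f (Iic μ) := by
    rw [← Iic_union_Ioc_eq_Iic hμ.le]
    exact hint_Iic.union hint_Ioc
  have hsplit : ∫ x in Iic μ, f x = ∫ x in Ioc 0 μ, f x := by
    rw [← Iic_union_Ioc_eq_Iic hμ.le, setIntegral_union (Iic_disjoint_Ioc le_rfl)
      measurableSet_Ioc hint_Iic hint_Ioc, setIntegral_congr_fun measurableSet_Iic hf_Iic]
    simp
  rw [← intervalIntegral.integral_Iic_add_Ioi hint_Iic_μ hint_Ioi, hsplit,
    setIntegral_congr_fun measurableSet_Ioc hf_Ioc, setIntegral_congr_fun measurableSet_Ioi hf_Ioi,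
    hintegralUpper, integral_Ioc_eq_momentPrimitive_sub (by linarith) hσ.ne' hμ.le]

theorem stmt9 (μ σ ε : ℝ) (hμ : 0 < μ) (hσ : 0 < σ) (hε1 : -1 < ε) (hε2 : ε < 1) :
    (∫ x : ℝ, max x 0 * esnPdf μ σ ε x)
      = μ - (1+ε) * Phi (-μ/((1+ε)*σ)) * μ + (1+ε)^2 * phi (-μ/((1+ε)*σ)) * σ
        - (4*ε / Real.sqrt (2*Real.pi)) * σ := by
  rw [integral_max_mul_esnPdf hμ hσ hε1 hε2, momentPrimitive_self, momentPrimitive_self,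
    momentPrimitive, zero_sub]
  field_simp
  ring
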